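/- arXiv:1010.4974 — 7 statements merged into one kernel-verified Lean document; each statement's English description precedes it below -/
import Mathlib

section
/- Let τ > 0 and let φ : ℝ → ℝ be a differentiable function with φ(s) > 0 for all s satisfying φ'(s)² + (φ(s)² − τ)² = φ(s)² for all s ∈ ℝ. Define ζ(s) := φ(s) + τ/φ(s). Then for every s ∈ ℝ one has ζ'(s)² = (ζ(s)² − 4τ)(1 + 4τ − ζ(s)²), and moreover ζ(s)² ≤ 1 + 4τ. -/
/-! Both factors are squares: `ζ² − 4τ = ((φ² − τ)/φ)²`, and, by
the ODE, `1 + 4τ − ζ² = (φ² − (φ² − τ)²)/φ² = (φ'/φ)²`. Since `ζ' = (φ'/φ)·((φ² − τ)/φ)`, the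
square of `ζ'` is their product, and the second factor is nonnegative. -/

lemma add_div_sq_sub_four_mul {x : ℝ} (c : ℝ) (hx : x ≠ 0) :
    (x + c / x) ^ 2 - 4 * c = ((x ^ 2 - c) / x) ^ 2 := by
  field_simp
  ring

lemma one_add_four_mul_sub_add_div_sq {x y c : ℝ} (hx : x ≠ 0)
    (h : y ^ 2 + (x ^ 2 - c) ^ 2 = x ^ 2) :
    1 + 4 * c - (x + c / x) ^ 2 = (y / x) ^ 2 := by
  field_simp
  linear_combination -h

lemma HasDerivAt.add_const_div {f : ℝ → ℝ} {f' x : ℝ} (hf : HasDerivAt f f' x) (c : ℝ)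
    (hx : f x ≠ 0) :
    HasDerivAt (fun t => f t + c / f t) (f' / f x * ((f x ^ 2 - c) / f x)) x := by
  refine (hf.add ((hasDerivAt_const x c).fun_div hf hx)).congr_deriv ?_
  field_simp
  ring

theorem delaunay_zeta_first_order_general (τ : ℝ) (φ : ℝ → ℝ)
    (hdiff : Differentiable ℝ φ) (hpos : ∀ s, 0 < φ s)
    (hode : ∀ s, (deriv φ s) ^ 2 + (φ s ^ 2 - τ) ^ 2 = φ s ^ 2) :
    ∀ s : ℝ,
      (deriv (fun t => φ t + τ / φ t) s) ^ 2
          = ((φ s + τ / φ s) ^ 2 - 4 * τ) * (1 + 4 * τ - (φ s + τ / φ s) ^ 2)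
        ∧ (φ s + τ / φ s) ^ 2 ≤ 1 + 4 * τ := by
  intro s
  have hφ : φ s ≠ 0 := (hpos s).ne'
  have hgap := one_add_four_mul_sub_add_div_sq hφ (hode s)
  refine ⟨?_, ?_⟩
  · rw [((hdiff s).hasDerivAt.add_const_div τ hφ).deriv, add_div_sq_sub_four_mul τ hφ, hgap]
    ring
  · nlinarith [sq_nonneg (deriv φ s / φ s)]

/-- For a positive solution `φ` of the Delaunay nodoid profile ODE
`φ'² + (φ² − τ)² = φ²`, the auxiliary function `ζ = φ + τ/φ` satisfies
`ζ'² = (ζ² − 4τ)(1 + 4τ − ζ²)` and `ζ² ≤ 1 + 4τ`. -/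
theorem delaunay_zeta_first_order (τ : ℝ) (hτ : 0 < τ) (φ : ℝ → ℝ)
    (hdiff : Differentiable ℝ φ) (hpos : ∀ s, 0 < φ s)
    (hode : ∀ s, (deriv φ s) ^ 2 + (φ s ^ 2 - τ) ^ 2 = φ s ^ 2) :
    ∀ s : ℝ,
      (deriv (fun t => φ t + τ / φ t) s) ^ 2
          = ((φ s + τ / φ s) ^ 2 - 4 * τ) * (1 + 4 * τ - (φ s + τ / φ s) ^ 2)
        ∧ (φ s + τ / φ s) ^ 2 ≤ 1 + 4 * τ :=
  delaunay_zeta_first_order_general τ φ hdiff hpos hode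
end

section
/- Let τ > 0 and let φ : ℝ → ℝ be a smooth function with φ(s) > 0 for all s satisfying φ'(s)² + (φ(s)² − τ)² = φ(s)² and φ''(s) = φ(s) − 2φ(s)(φ(s)² − τ) for all s ∈ ℝ. Then the function w(s) := φ(s) − τ/φ(s) satisfies w''(s) − w(s) + 2(φ(s)² + τ²/φ(s)²) · w(s) = 0 for all s ∈ ℝ. -/
open Real

/-- The function `w = φ − τ/φ` (the Jacobi field of the Delaunay nodoid associated to
horizontal translations) satisfies `w'' − w + 2(φ² + τ²/φ²) w = 0`. -/
theorem delaunay_jacobi_field_horizontal (τ : ℝ) (hτ : 0 < τ) (φ : ℝ → ℝ)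
    (hsmooth : ContDiff ℝ (⊤ : ℕ∞) φ) (hpos : ∀ s, 0 < φ s)
    (hode1 : ∀ s, (deriv φ s) ^ 2 + (φ s ^ 2 - τ) ^ 2 = φ s ^ 2)
    (hode2 : ∀ s, deriv (deriv φ) s = φ s - 2 * φ s * (φ s ^ 2 - τ)) :
    ∀ s : ℝ, deriv (deriv (fun t => φ t - τ / φ t)) s - (φ s - τ / φ s)
      + 2 * (φ s ^ 2 + τ ^ 2 / φ s ^ 2) * (φ s - τ / φ s) = 0 := by
  intro s
  obtain ⟨hφd, hrest⟩ := contDiff_infty_iff_deriv.mp (hsmooth.of_le (by simp))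
  have hφ'd : Differentiable ℝ (deriv φ) := hrest.differentiable (by simp)
  have hne : ∀ t, φ t ≠ 0 := fun t => (hpos t).ne'
  have hderiv1 : deriv (fun t => φ t - τ / φ t)
      = fun t => deriv φ t * (1 + τ / φ t ^ 2) := by
    funext t
    have h1 : HasDerivAt φ (deriv φ t) t := (hφd t).hasDerivAt
    have h2 : HasDerivAt (fun u => τ / φ u)
        ((0 * φ t - τ * deriv φ t) / φ t ^ 2) t :=
      (hasDerivAt_const t τ).div h1 (hne t)
    rw [(h1.fun_sub h2).deriv]
    field_simp
    ring
  rw [hderiv1]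
  have h1 : HasDerivAt φ (deriv φ s) s := (hφd s).hasDerivAt
  have h1' : HasDerivAt (deriv φ) (deriv (deriv φ) s) s := (hφ'd s).hasDerivAt
  have hsq : HasDerivAt (fun t => φ t ^ 2) (2 * φ s * deriv φ s) s := by
    have := h1.fun_pow 2
    simpa [mul_comm, mul_assoc] using this
  have h2 : HasDerivAt (fun t => 1 + τ / φ t ^ 2)
      (0 + (0 * φ s ^ 2 - τ * (2 * φ s * deriv φ s)) / (φ s ^ 2) ^ 2) s :=
    (hasDerivAt_const s (1:ℝ)).add
      (((hasDerivAt_const s τ).div hsq (pow_ne_zero 2 (hne s))))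
  have h4 := h1'.fun_mul h2
  rw [h4.deriv]
  have e1 := hode1 s
  have e2 := hode2 s
  have hne' := hne s
  rw [e2]
  have hphi2 : (deriv φ s) ^ 2 = φ s ^ 2 - (φ s ^ 2 - τ) ^ 2 := by linarith
  field_simp
  linear_combination (-2 * τ) * hphi2
end

section
/- Let τ > 0 and let φ : ℝ → ℝ be a differentiable function with φ(s) > 0 for all s satisfying φ'(s)² + (φ(s)² − τ)² = φ(s)² for all s ∈ ℝ. Then for every s ∈ ℝ one has 2(φ(s)² + τ²/φ(s)²) = 2(φ(s) − τ/φ(s))² + 4τ ≤ 2 + 4τ. -/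
/-!
Completing the square gives `φ² + τ²/φ² = (φ − τ/φ)² + 2τ`, and dividing the profile equation
by `φ²` gives `(φ − τ/φ)² = 1 − (φ'/φ)² ≤ 1`.
-/

theorem sq_add_sq_div_sq_eq {x : ℝ} (hx : x ≠ 0) (τ : ℝ) :
    x ^ 2 + τ ^ 2 / x ^ 2 = (x - τ / x) ^ 2 + 2 * τ := by
  field_simp
  ring

theorem sub_div_sq_eq_one_sub_div_sq {x y τ : ℝ} (hx : x ≠ 0)
    (h : y ^ 2 + (x ^ 2 - τ) ^ 2 = x ^ 2) :
    (x - τ / x) ^ 2 = 1 - (y / x) ^ 2 := by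
  field_simp
  linear_combination h

theorem delaunay_jacobi_potential_bound_general (τ : ℝ) (φ : ℝ → ℝ)
    (hpos : ∀ s, 0 < φ s)
    (hode : ∀ s, (deriv φ s) ^ 2 + (φ s ^ 2 - τ) ^ 2 = φ s ^ 2) :
    ∀ s : ℝ,
      2 * (φ s ^ 2 + τ ^ 2 / φ s ^ 2) = 2 * (φ s - τ / φ s) ^ 2 + 4 * τ
        ∧ 2 * (φ s - τ / φ s) ^ 2 + 4 * τ ≤ 2 + 4 * τ := by
  intro s
  have hφ : φ s ≠ 0 := (hpos s).ne'
  refine ⟨by rw [sq_add_sq_div_sq_eq hφ]; ring, ?_⟩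
  rw [sub_div_sq_eq_one_sub_div_sq hφ (hode s)]
  linarith [sq_nonneg (deriv φ s / φ s)]

/-- Bound on the potential of the Jacobi operator of the Delaunay nodoid:
`2(φ² + τ²/φ²) = 2(φ − τ/φ)² + 4τ ≤ 2 + 4τ`. -/
theorem delaunay_jacobi_potential_bound (τ : ℝ) (hτ : 0 < τ) (φ : ℝ → ℝ)
    (hdiff : Differentiable ℝ φ) (hpos : ∀ s, 0 < φ s)
    (hode : ∀ s, (deriv φ s) ^ 2 + (φ s ^ 2 - τ) ^ 2 = φ s ^ 2) :
    ∀ s : ℝ,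
      2 * (φ s ^ 2 + τ ^ 2 / φ s ^ 2) = 2 * (φ s - τ / φ s) ^ 2 + 4 * τ
        ∧ 2 * (φ s - τ / φ s) ^ 2 + 4 * τ ≤ 2 + 4 * τ :=
  delaunay_jacobi_potential_bound_general τ φ hpos hode
end

section
/- Let τ ∈ (0, 1/2) and let φ : ℝ → ℝ be a differentiable function with φ(s) > 0 for all s satisfying φ'(s)² + (φ(s)² − τ)² = φ(s)² for all s ∈ ℝ. Let w : ℝ × ℝ → ℝ be a smooth function, 2π-periodic in its second variable, with compact support in the first variable, such that for every s ∈ ℝ: ∫₀^{2π} w(s,θ) dθ = 0, ∫₀^{2π} w(s,θ) cos θ dθ = 0 and ∫₀^{2π} w(s,θ) sin θ dθ = 0. Then ∫_ℝ ∫₀^{2π} ( (∂ₛw)² + (∂_θw)² − 2(φ(s)² + τ²/φ(s)²) w² ) dθ ds ≥ (2 − 4τ) ∫_ℝ ∫₀^{2π} w² dθ ds. -/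
open Real MeasureTheory

open Real MeasureTheory Complex intervalIntegral

instance fact2pi : Fact (0 < 2 * π) := ⟨by positivity⟩


lemma parseval_per (u : ℝ → ℝ) (hu : Continuous u)
    (hper : ∀ θ, u (θ + 2 * π) = u θ) :
    Summable (fun n : ℤ => ‖fourierCoeff (AddCircle.liftIco (2*π) 0 (fun x => (u x : ℂ))) n‖^2) ∧
    ∑' n : ℤ, ‖fourierCoeff (AddCircle.liftIco (2*π) 0 (fun x => (u x:ℂ))) n‖^2
      = (2*π)⁻¹ * ∫ x in (0:ℝ)..2*π, (u x)^2 := by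
  have hT : Fact (0 < 2 * π) := fact2pi
  set uC : ℝ → ℂ := fun x => (u x : ℂ) with huC
  have hbd : uC 0 = uC (0 + 2 * π) := by
    have h := hper 0; rw [zero_add] at h; simp [huC, h]
  have hUcont : Continuous (AddCircle.liftIco (2*π) 0 uC) :=
    AddCircle.liftIco_continuous hbd ((Complex.continuous_ofReal.comp hu).continuousOn)
  set Gc : C(AddCircle (2*π), ℂ) := ⟨AddCircle.liftIco (2*π) 0 uC, hUcont⟩ with hGc
  have hcoeff : ∀ n : ℤ, fourierCoeff (⇑(ContinuousMap.toLp (E := ℂ) 2 AddCircle.haarAddCircle ℂ Gc)) n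
      = fourierCoeff (AddCircle.liftIco (2*π) 0 uC) n := fun n => fourierCoeff_toLp Gc n
  constructor
  · have hm := lp.memℓp (fourierBasis.repr (ContinuousMap.toLp (E := ℂ) 2 AddCircle.haarAddCircle ℂ Gc))
    rw [memℓp_gen_iff (by norm_num)] at hm
    have : (fun i : ℤ => ‖fourierBasis.repr (ContinuousMap.toLp (E := ℂ) 2 AddCircle.haarAddCircle ℂ Gc) i‖ ^ ((2:ENNReal)).toReal)
        = fun n : ℤ => ‖fourierCoeff (AddCircle.liftIco (2*π) 0 uC) n‖^2 := by
      funext n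
      rw [fourierBasis_repr, hcoeff n]
      norm_num
    rwa [this] at hm
  · have hPar := tsum_sq_fourierCoeff (ContinuousMap.toLp (E := ℂ) 2 AddCircle.haarAddCircle ℂ Gc)
    simp_rw [hcoeff] at hPar
    rw [hPar]
    -- now compute ∫ ‖toLp Gc t‖^2 ∂haar
    have hae : (fun t => ‖(ContinuousMap.toLp (E := ℂ) 2 AddCircle.haarAddCircle ℂ Gc : AddCircle (2*π) → ℂ) t‖^2)
        =ᵐ[AddCircle.haarAddCircle] (fun t => ‖Gc t‖^2) := by
      filter_upwards [ContinuousMap.coeFn_toLp (𝕜 := ℂ) (p := 2) AddCircle.haarAddCircle Gc] with t ht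
      rw [ht]
    rw [integral_congr_ae hae]
    have hvol : ∫ x in (0:ℝ)..(0 + 2*π), ‖Gc x‖^2 = ∫ t, ‖Gc t‖^2 ∂(volume) :=
      AddCircle.intervalIntegral_preimage (2*π) 0 (fun t => ‖Gc t‖^2)
    rw [AddCircle.volume_eq_smul_haarAddCircle, MeasureTheory.integral_smul_measure] at hvol
    have h2 : ∫ x in (0:ℝ)..(0 + 2*π), ‖Gc (x : AddCircle (2*π))‖^2 = ∫ x in (0:ℝ)..(2*π), (u x)^2 := by
      rw [zero_add]
      apply intervalIntegral.integral_congr_ae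
      have hne : ∀ᵐ x : ℝ, x ≠ 2 * π := by
        refine ae_iff.mpr ?_
        simp only [not_ne_iff, Set.setOf_eq_eq_singleton]
        exact measure_singleton _
      filter_upwards [hne] with x hx hmem
      rw [Set.uIoc_of_le hT.out.le] at hmem
      have hx' : x ∈ Set.Ico (0:ℝ) (0 + 2*π) := by
        constructor
        · exact hmem.1.le
        · rw [zero_add]; exact lt_of_le_of_ne hmem.2 hx
      show ‖AddCircle.liftIco (2*π) 0 uC (x : AddCircle (2*π))‖^2 = _
      rw [AddCircle.liftIco_coe_apply hx']
      simp [huC, sq_abs]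
    rw [h2] at hvol
    rw [ENNReal.toReal_ofReal hT.out.le, smul_eq_mul] at hvol
    have hπ : (2*π) ≠ 0 := hT.out.ne'
    rw [hvol, inv_mul_cancel_left₀ hπ]


lemma coeff_low (u : ℝ → ℝ) (hu : Continuous u)
    (h0 : (∫ θ in (0:ℝ)..(2*π), u θ) = 0)
    (hc : (∫ θ in (0:ℝ)..(2*π), u θ * Real.cos θ) = 0)
    (hs : (∫ θ in (0:ℝ)..(2*π), u θ * Real.sin θ) = 0) :
    ∀ n : ℤ, n = 0 ∨ n = 1 ∨ n = -1 →
      fourierCoeff (AddCircle.liftIco (2*π) 0 (fun x => (u x : ℂ))) n = 0 := by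
  have h2 : (0:ℝ) + 2*π = 2*π := zero_add _
  intro n hn
  rw [fourierCoeff_liftIco_eq, fourierCoeffOn_eq_integral]
  rcases hn with rfl | rfl | rfl
  · have key : ∀ x : ℝ, (fourier (-(0:ℤ)) (x : AddCircle (0+2*π-0)) : ℂ) • ((u x : ℂ))
        = ((u x : ℂ)) := by
      intro x; rw [neg_zero, fourier_zero, one_smul]
    rw [intervalIntegral.integral_congr (fun x _ => key x), h2,
      intervalIntegral.integral_ofReal, h0]
    simp
  · have key : ∀ x : ℝ, (fourier (-(1:ℤ)) (x : AddCircle (0+2*π-0)) : ℂ) • ((u x : ℂ))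
        = (↑(u x * Real.cos x) : ℂ) - (↑(u x * Real.sin x)) * Complex.I := by
      intro x
      rw [smul_eq_mul, fourier_coe_apply]
      have harg : 2 * ↑π * Complex.I * ↑(-1:ℤ) * ↑x / ↑((0:ℝ)+2*π-0) = (↑(-x) : ℂ) * Complex.I := by
        push_cast
        have : (π : ℂ) ≠ 0 := Complex.ofReal_ne_zero.mpr Real.pi_ne_zero
        field_simp
        ring
      rw [harg, Complex.exp_mul_I]
      simp only [Complex.ofReal_neg, Complex.cos_neg, Complex.sin_neg,
        ← Complex.ofReal_cos, ← Complex.ofReal_sin]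
      push_cast
      ring
    rw [intervalIntegral.integral_congr (fun x _ => key x), h2,
      intervalIntegral.integral_sub
        ((by fun_prop : Continuous fun x : ℝ => (↑(u x * Real.cos x) : ℂ)).intervalIntegrable _ _)
        ((by fun_prop : Continuous fun x : ℝ => (↑(u x * Real.sin x) : ℂ) * Complex.I).intervalIntegrable _ _),
      intervalIntegral.integral_mul_const, intervalIntegral.integral_ofReal,
      intervalIntegral.integral_ofReal, hc, hs]
    simp
  · have key : ∀ x : ℝ, (fourier (-(-1:ℤ)) (x : AddCircle (0+2*π-0)) : ℂ) • ((u x : ℂ))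
        = (↑(u x * Real.cos x) : ℂ) + (↑(u x * Real.sin x)) * Complex.I := by
      intro x
      rw [smul_eq_mul, fourier_coe_apply]
      have harg : 2 * ↑π * Complex.I * ↑(-(-1):ℤ) * ↑x / ↑((0:ℝ)+2*π-0) = (↑x : ℂ) * Complex.I := by
        push_cast
        have : (π : ℂ) ≠ 0 := Complex.ofReal_ne_zero.mpr Real.pi_ne_zero
        field_simp
        ring
      rw [harg, Complex.exp_mul_I]
      simp only [← Complex.ofReal_cos, ← Complex.ofReal_sin]
      push_cast
      ring
    rw [intervalIntegral.integral_congr (fun x _ => key x), h2,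
      intervalIntegral.integral_add
        ((by fun_prop : Continuous fun x : ℝ => (↑(u x * Real.cos x) : ℂ)).intervalIntegrable _ _)
        ((by fun_prop : Continuous fun x : ℝ => (↑(u x * Real.sin x) : ℂ) * Complex.I).intervalIntegrable _ _),
      intervalIntegral.integral_mul_const, intervalIntegral.integral_ofReal,
      intervalIntegral.integral_ofReal, hc, hs]
    simp

lemma coeff_deriv (g : ℝ → ℝ) (hg : ContDiff ℝ (⊤ : ℕ∞) g)
    (hper : ∀ θ, g (θ + 2 * π) = g θ) (n : ℤ) (hn : n ≠ 0) :
    fourierCoeff (AddCircle.liftIco (2*π) 0 (fun x => ((deriv g x : ℝ) : ℂ))) n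
      = Complex.I * n * fourierCoeff (AddCircle.liftIco (2*π) 0 (fun x => (g x : ℂ))) n := by
  rw [fourierCoeff_liftIco_eq, fourierCoeff_liftIco_eq]
  have hder : ∀ x ∈ Set.uIcc (0:ℝ) (0+2*π), HasDerivAt (fun x : ℝ => (g x : ℂ)) ((deriv g x : ℝ) : ℂ) x :=
    fun x _ => ((hg.differentiable (by simp)).differentiableAt.hasDerivAt).ofReal_comp
  have hint : IntervalIntegrable (fun x : ℝ => ((deriv g x : ℝ) : ℂ)) volume 0 (0+2*π) :=
    (Complex.continuous_ofReal.comp (hg.continuous_deriv (by simp))).intervalIntegrable _ _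
  have hrel := fourierCoeffOn_of_hasDerivAt (lt_add_of_pos_right 0 fact2pi.out) hn hder hint
  simp only [hper 0, sub_self, mul_zero, zero_sub] at hrel
  rw [hrel]
  have hπ : (π : ℂ) ≠ 0 := Complex.ofReal_ne_zero.mpr Real.pi_ne_zero
  have hnC : (n : ℂ) ≠ 0 := Int.cast_ne_zero.mpr hn
  field_simp
  push_cast; ring

lemma wirtinger2 (g : ℝ → ℝ) (hg : ContDiff ℝ (⊤ : ℕ∞) g)
    (hper : ∀ θ, g (θ + 2 * π) = g θ)
    (h0 : (∫ θ in (0:ℝ)..(2*π), g θ) = 0)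
    (hc : (∫ θ in (0:ℝ)..(2*π), g θ * Real.cos θ) = 0)
    (hs : (∫ θ in (0:ℝ)..(2*π), g θ * Real.sin θ) = 0) :
    4 * ∫ θ in (0:ℝ)..(2*π), (g θ)^2 ≤ ∫ θ in (0:ℝ)..(2*π), (deriv g θ)^2 := by
  have hper' : ∀ θ, deriv g (θ + 2 * π) = deriv g θ := by
    intro θ
    have hfe : (fun t => g (t + 2 * π)) = g := funext hper
    calc deriv g (θ + 2 * π) = deriv (fun t => g (t + 2 * π)) θ := by
          rw [deriv_comp_add_const]
      _ = deriv g θ := by rw [hfe]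
  obtain ⟨sg, pg⟩ := parseval_per g hg.continuous hper
  obtain ⟨sd, pd⟩ := parseval_per (deriv g) (hg.continuous_deriv (by simp)) hper'
  set c : ℤ → ℂ := fun n => fourierCoeff (AddCircle.liftIco (2*π) 0 (fun x => (g x : ℂ))) n with hcdef
  set d : ℤ → ℂ := fun n => fourierCoeff (AddCircle.liftIco (2*π) 0 (fun x => ((deriv g x : ℝ) : ℂ))) n with hddef
  have term : ∀ n : ℤ, 4 * ‖c n‖^2 ≤ ‖d n‖^2 := by
    intro n
    by_cases hn : n = 0 ∨ n = 1 ∨ n = -1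
    · have hz : c n = 0 := coeff_low g hg.continuous h0 hc hs n hn
      rw [hz]
      simp
    · push_neg at hn
      have hn0 : n ≠ 0 := hn.1
      have hrel : d n = Complex.I * n * c n := coeff_deriv g hg hper n hn0
      have hnrm : ‖d n‖ = |(n:ℝ)| * ‖c n‖ := by
        rw [hrel]
        rw [norm_mul, norm_mul, Complex.norm_I, one_mul]
        norm_num
      have habs : (2:ℝ) ≤ |(n:ℝ)| := by
        have h2' : 2 ≤ n ∨ n ≤ -2 := by omega
        rcases h2' with h | h
        · exact le_abs.mpr (Or.inl (by exact_mod_cast h))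
        · refine le_abs.mpr (Or.inr ?_)
          have : (2:ℤ) ≤ -n := by omega
          exact_mod_cast this
      rw [hnrm, mul_pow]
      have h1 : (4:ℝ) ≤ |(n:ℝ)|^2 := by nlinarith
      nlinarith [sq_nonneg ‖c n‖, norm_nonneg (c n)]
  have hmono : ∑' n : ℤ, (4 * ‖c n‖^2) ≤ ∑' n : ℤ, ‖d n‖^2 :=
    Summable.tsum_le_tsum term (sg.mul_left 4) sd
  rw [tsum_mul_left] at hmono
  have hπ : (0:ℝ) < 2 * π := by positivity
  have e1 : (∫ θ in (0:ℝ)..(2*π), (g θ)^2) = 2*π * ∑' n : ℤ, ‖c n‖^2 := by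
    rw [pg, mul_inv_cancel_left₀ hπ.ne']
  have e2 : (∫ θ in (0:ℝ)..(2*π), (deriv g θ)^2) = 2*π * ∑' n : ℤ, ‖d n‖^2 := by
    rw [pd, mul_inv_cancel_left₀ hπ.ne']
  rw [e1, e2]
  have hfin := mul_le_mul_of_nonneg_left hmono (le_of_lt hπ)
  nlinarith [hfin]

/-- Coercivity of the quadratic form associated to the Jacobi operator of the
Delaunay nodoid, on functions on the cylinder whose Fourier decomposition in `θ`
has no components on the modes `1`, `cos θ` and `sin θ`. -/
theorem delaunay_jacobi_coercivity (τ : ℝ) (hτ0 : 0 < τ) (hτ1 : τ < 1 / 2)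
    (φ : ℝ → ℝ) (hdiff : Differentiable ℝ φ) (hpos : ∀ s, 0 < φ s)
    (hode : ∀ s, (deriv φ s) ^ 2 + (φ s ^ 2 - τ) ^ 2 = φ s ^ 2)
    (w : ℝ → ℝ → ℝ)
    (hw : ContDiff ℝ (⊤ : ℕ∞) (fun p : ℝ × ℝ => w p.1 p.2))
    (hper : ∀ s θ : ℝ, w s (θ + 2 * π) = w s θ)
    (hsupp : ∃ R : ℝ, ∀ s θ : ℝ, R < |s| → w s θ = 0)
    (h0 : ∀ s : ℝ, (∫ θ in (0:ℝ)..(2 * π), w s θ) = 0)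
    (hc : ∀ s : ℝ, (∫ θ in (0:ℝ)..(2 * π), w s θ * Real.cos θ) = 0)
    (hs : ∀ s : ℝ, (∫ θ in (0:ℝ)..(2 * π), w s θ * Real.sin θ) = 0) :
    (∫ s : ℝ, ∫ θ in (0:ℝ)..(2 * π),
        ((deriv (fun s' => w s' θ) s) ^ 2 + (deriv (fun θ' => w s θ') θ) ^ 2
          - 2 * (φ s ^ 2 + τ ^ 2 / φ s ^ 2) * (w s θ) ^ 2))
      ≥ (2 - 4 * τ) * ∫ s : ℝ, ∫ θ in (0:ℝ)..(2 * π), (w s θ) ^ 2 := by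
  obtain ⟨R, hR⟩ := hsupp
  have hφc : Continuous φ := hdiff.continuous
  have hpot : ∀ s, 2 * (φ s ^ 2 + τ ^ 2 / φ s ^ 2) ≤ 2 + 4 * τ := by
    intro s
    have hp := hpos s
    have h1 : (φ s ^ 2 - τ) ^ 2 ≤ φ s ^ 2 := by nlinarith [sq_nonneg (deriv φ s), hode s]
    have hp2 : (0:ℝ) < φ s ^ 2 := by positivity
    have h2 : τ ^ 2 / φ s ^ 2 ≤ 1 + 2 * τ - φ s ^ 2 := by
      rw [div_le_iff₀ hp2]; nlinarith
    linarith
  have hpotc : Continuous fun s => 2 * (φ s ^ 2 + τ ^ 2 / φ s ^ 2) :=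
    continuous_const.mul ((hφc.pow 2).add
      (Continuous.div continuous_const (hφc.pow 2) fun s => pow_ne_zero 2 (hpos s).ne'))
  set W : ℝ × ℝ → ℝ := fun p => w p.1 p.2 with hW
  have hWd : Differentiable ℝ W := hw.differentiable (by simp)
  have hws : ∀ s, ContDiff ℝ (⊤ : ℕ∞) (w s) := fun s =>
    hw.comp (ContDiff.prodMk (contDiff_const (c := s)) contDiff_id)
  have hd1 : ∀ s θ : ℝ, deriv (fun s' => w s' θ) s = fderiv ℝ W (s, θ) (1, 0) := by
    intro s θ
    have hcv : HasDerivAt (fun s' : ℝ => (s', θ)) ((1:ℝ), (0:ℝ)) s :=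
      (hasDerivAt_id s).prodMk (hasDerivAt_const s θ)
    exact ((hWd (s, θ)).hasFDerivAt.comp_hasDerivAt s hcv).deriv
  have hd2 : ∀ s θ : ℝ, deriv (fun θ' => w s θ') θ = fderiv ℝ W (s, θ) (0, 1) := by
    intro s θ
    have hcv : HasDerivAt (fun θ' : ℝ => (s, θ')) ((0:ℝ), (1:ℝ)) θ :=
      (hasDerivAt_const θ s).prodMk (hasDerivAt_id θ)
    exact ((hWd (s, θ)).hasFDerivAt.comp_hasDerivAt θ hcv).deriv
  have hcont1 : Continuous fun p : ℝ × ℝ => fderiv ℝ W p (1, 0) :=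
    (hw.continuous_fderiv (by simp)).clm_apply continuous_const
  have hcont2 : Continuous fun p : ℝ × ℝ => fderiv ℝ W p (0, 1) :=
    (hw.continuous_fderiv (by simp)).clm_apply continuous_const
  set B : ℝ → ℝ := fun s => ∫ θ in (0:ℝ)..(2 * π), (w s θ) ^ 2 with hB
  set A : ℝ → ℝ := fun s => ∫ θ in (0:ℝ)..(2 * π),
      ((deriv (fun s' => w s' θ) s) ^ 2 + (deriv (fun θ' => w s θ') θ) ^ 2
        - 2 * (φ s ^ 2 + τ ^ 2 / φ s ^ 2) * (w s θ) ^ 2) with hA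
  -- continuity of B
  have hBc : Continuous B := by
    apply intervalIntegral.continuous_parametric_intervalIntegral_of_continuous'
    show Continuous fun p : ℝ × ℝ => (w p.1 p.2) ^ 2
    exact hw.pow 2 |>.continuous
  -- continuity of A
  have hAc : Continuous A := by
    have hA' : A = fun s => ∫ θ in (0:ℝ)..(2 * π),
        ((fderiv ℝ W (s, θ) (1, 0)) ^ 2 + (fderiv ℝ W (s, θ) (0, 1)) ^ 2
          - 2 * (φ s ^ 2 + τ ^ 2 / φ s ^ 2) * (w s θ) ^ 2) := by
      funext s
      show (∫ θ in (0:ℝ)..(2 * π),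
        ((deriv (fun s' => w s' θ) s) ^ 2 + (deriv (fun θ' => w s θ') θ) ^ 2
          - 2 * (φ s ^ 2 + τ ^ 2 / φ s ^ 2) * (w s θ) ^ 2)) = _
      refine intervalIntegral.integral_congr fun θ _ => ?_
      beta_reduce
      rw [hd1 s θ, hd2 s θ]
    rw [hA']
    apply intervalIntegral.continuous_parametric_intervalIntegral_of_continuous'
    show Continuous fun p : ℝ × ℝ =>
      ((fderiv ℝ W p (1, 0)) ^ 2 + (fderiv ℝ W p (0, 1)) ^ 2
        - 2 * (φ p.1 ^ 2 + τ ^ 2 / φ p.1 ^ 2) * (w p.1 p.2) ^ 2)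
    exact ((hcont1.pow 2).add (hcont2.pow 2)).sub
      ((hpotc.comp continuous_fst).mul (hw.continuous.pow 2))
  -- vanishing outside a compact set
  have hBz : ∀ s, R < |s| → B s = 0 := by
    intro s hRs
    show (∫ θ in (0:ℝ)..(2 * π), (w s θ) ^ 2) = 0
    have : ∀ θ ∈ Set.uIcc (0:ℝ) (2 * π), (w s θ) ^ 2 = (fun _ : ℝ => (0:ℝ)) θ := by
      intro θ _; rw [hR s θ hRs]; norm_num
    rw [intervalIntegral.integral_congr this, intervalIntegral.integral_const]
    simp
  have hAz : ∀ s, R < |s| → A s = 0 := by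
    intro s hRs
    show (∫ θ in (0:ℝ)..(2 * π),
        ((deriv (fun s' => w s' θ) s) ^ 2 + (deriv (fun θ' => w s θ') θ) ^ 2
          - 2 * (φ s ^ 2 + τ ^ 2 / φ s ^ 2) * (w s θ) ^ 2)) = 0
    have hU : IsOpen {x : ℝ | R < |x|} := isOpen_lt continuous_const continuous_abs
    have : ∀ θ ∈ Set.uIcc (0:ℝ) (2 * π),
        ((deriv (fun s' => w s' θ) s) ^ 2 + (deriv (fun θ' => w s θ') θ) ^ 2
          - 2 * (φ s ^ 2 + τ ^ 2 / φ s ^ 2) * (w s θ) ^ 2) = (fun _ : ℝ => (0:ℝ)) θ := by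
      intro θ _
      have h1 : deriv (fun s' => w s' θ) s = 0 := by
        have hev : (fun s' => w s' θ) =ᶠ[nhds s] (fun _ => (0:ℝ)) :=
          Filter.eventuallyEq_of_mem (hU.mem_nhds hRs) (fun x hx => hR x θ hx)
        rw [hev.deriv_eq, deriv_const]
      have h2 : deriv (fun θ' => w s θ') θ = 0 := by
        have hws0 : (fun θ' => w s θ') = fun _ => (0:ℝ) := funext fun θ' => hR s θ' hRs
        rw [hws0, deriv_const]
      rw [h1, h2, hR s θ hRs]
      norm_num
    rw [intervalIntegral.integral_congr this, intervalIntegral.integral_const]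
    simp
  have habs : ∀ s : ℝ, s ∉ Set.Icc (-(|R| + 1)) (|R| + 1) → R < |s| := by
    intro s hsm
    simp only [Set.mem_Icc, not_and_or, not_le] at hsm
    rcases hsm with h | h
    · have h1 := neg_le_abs s
      have h2 := le_abs_self R
      linarith
    · have h1 := le_abs_self s
      have h2 := le_abs_self R
      linarith
  have hAsupp : HasCompactSupport A :=
    HasCompactSupport.intro isCompact_Icc fun s hsm => hAz s (habs s hsm)
  have hBsupp : HasCompactSupport B :=
    HasCompactSupport.intro isCompact_Icc fun s hsm => hBz s (habs s hsm)
  have hAint : Integrable A := hAc.integrable_of_hasCompactSupport hAsupp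
  have hBint : Integrable B := hBc.integrable_of_hasCompactSupport hBsupp
  -- pointwise inequality
  have key : ∀ s, (2 - 4 * τ) * B s ≤ A s := by
    intro s
    have h2π : (0:ℝ) ≤ 2 * π := by positivity
    have hZ : 0 ≤ B s := intervalIntegral.integral_nonneg h2π fun θ _ => sq_nonneg _
    have hwir := wirtinger2 (w s) (hws s) (hper s) (h0 s) (hc s) (hs s)
    have iX : IntervalIntegrable (fun θ => (deriv (fun s' => w s' θ) s) ^ 2) volume 0 (2 * π) := by
      have he : (fun θ => (deriv (fun s' => w s' θ) s) ^ 2)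
          = fun θ => (fderiv ℝ W (s, θ) (1, 0)) ^ 2 := funext fun θ => by rw [hd1]
      rw [he]
      exact ((hcont1.comp (continuous_const.prodMk continuous_id)).pow 2).intervalIntegrable _ _
    have iY : IntervalIntegrable (fun θ => (deriv (fun θ' => w s θ') θ) ^ 2) volume 0 (2 * π) :=
      (((hws s).continuous_deriv (by simp)).pow 2).intervalIntegrable _ _
    have iZ : IntervalIntegrable
        (fun θ => 2 * (φ s ^ 2 + τ ^ 2 / φ s ^ 2) * (w s θ) ^ 2) volume 0 (2 * π) :=
      (continuous_const.mul (((hws s).continuous).pow 2)).intervalIntegrable _ _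
    have split : A s = (∫ θ in (0:ℝ)..(2 * π), (deriv (fun s' => w s' θ) s) ^ 2)
        + (∫ θ in (0:ℝ)..(2 * π), (deriv (fun θ' => w s θ') θ) ^ 2)
        - 2 * (φ s ^ 2 + τ ^ 2 / φ s ^ 2) * B s := by
      show (∫ θ in (0:ℝ)..(2 * π),
        ((deriv (fun s' => w s' θ) s) ^ 2 + (deriv (fun θ' => w s θ') θ) ^ 2
          - 2 * (φ s ^ 2 + τ ^ 2 / φ s ^ 2) * (w s θ) ^ 2)) = _ + _
          - 2 * (φ s ^ 2 + τ ^ 2 / φ s ^ 2) * (∫ θ in (0:ℝ)..(2 * π), (w s θ) ^ 2)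
      rw [← intervalIntegral.integral_const_mul,
        ← intervalIntegral.integral_add iX iY, ← intervalIntegral.integral_sub (iX.add iY) iZ]
    have hX : 0 ≤ ∫ θ in (0:ℝ)..(2 * π), (deriv (fun s' => w s' θ) s) ^ 2 :=
      intervalIntegral.integral_nonneg h2π fun θ _ => sq_nonneg _
    have hBeq : B s = ∫ θ in (0:ℝ)..(2 * π), (w s θ) ^ 2 := rfl
    have hYeq : (∫ θ in (0:ℝ)..(2 * π), (deriv (fun θ' => w s θ') θ) ^ 2)
        = ∫ θ in (0:ℝ)..(2 * π), (deriv (w s) θ) ^ 2 := rfl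
    have hY : 4 * B s ≤ ∫ θ in (0:ℝ)..(2 * π), (deriv (fun θ' => w s θ') θ) ^ 2 := by
      rw [hYeq, hBeq]; exact hwir
    have hPZ : 2 * (φ s ^ 2 + τ ^ 2 / φ s ^ 2) * B s ≤ (2 + 4 * τ) * B s :=
      mul_le_mul_of_nonneg_right (hpot s) hZ
    linarith [split]
  rw [ge_iff_le, ← MeasureTheory.integral_const_mul]
  exact integral_mono (hBint.const_mul _) hAint key
end

section
/- Let w : ℝ × ℝ → ℝ be a smooth function, 2π-periodic in its second variable, with compact support in the first variable, such that for every s ∈ ℝ: ∫₀^{2π} w(s,θ) dθ = 0, ∫₀^{2π} w(s,θ) cos θ dθ = 0 and ∫₀^{2π} w(s,θ) sin θ dθ = 0. Then ∫_ℝ ∫₀^{2π} ( (∂ₛw)² + (∂_θw)² − (2/cosh²s) w² ) dθ ds ≥ 2 ∫_ℝ ∫₀^{2π} w² dθ ds. -/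
open Real MeasureTheory Complex AddCircle Set
open scoped ENNReal

instance fact_two_pi_pos : Fact (0 < 2*π) := ⟨by positivity⟩

section aux
variable {φ : ℝ → ℂ}

lemma periodic_lift_continuous (hφ : Continuous φ) (hp : Function.Periodic φ (2*π)) :
    Continuous (hp.lift : AddCircle (2*π) → ℂ) :=
  hφ.quotient_liftOn' _

lemma parseval_aux (hφ : Continuous φ) (hp : Function.Periodic φ (2*π)) :
    Summable (fun n : ℤ => ‖fourierCoeff hp.lift n‖^2) ∧
    (∑' n : ℤ, ‖fourierCoeff hp.lift n‖^2)
      = (1/(2*π)) * ∫ x in (0:ℝ)..(2*π), ‖φ x‖^2 := by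
  set Φ : C(AddCircle (2*π), ℂ) := ⟨hp.lift, periodic_lift_continuous hφ hp⟩ with hΦ
  set F := ContinuousMap.toLp (E := ℂ) 2 haarAddCircle ℂ Φ with hF
  have hcoeff : ∀ n : ℤ, fourierCoeff (F : AddCircle (2*π) → ℂ) n = fourierCoeff hp.lift n := by
    intro n
    exact fourierCoeff_toLp Φ n
  constructor
  · have hsum := (lp.memℓp (fourierBasis.repr F)).summable (p := 2) (by norm_num)
    have heq : (fun n : ℤ => ‖fourierBasis.repr F n‖ ^ (2:ℝ≥0∞).toReal)
        = fun n : ℤ => ‖fourierCoeff hp.lift n‖^2 := by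
      funext n
      rw [fourierBasis_repr, hcoeff]
      norm_num
    rwa [heq] at hsum
  · have hpar := tsum_sq_fourierCoeff F
    simp_rw [hcoeff] at hpar
    rw [hpar]
    have h1 : ∫ t : AddCircle (2*π), ‖F t‖^2 ∂haarAddCircle
        = ∫ t : AddCircle (2*π), ‖Φ t‖^2 ∂haarAddCircle := by
      refine integral_congr_ae ?_
      filter_upwards [ContinuousMap.coeFn_toLp (p := 2) (E := ℂ) haarAddCircle (𝕜 := ℂ) Φ] with t ht
      rw [← hF] at ht
      rw [ht]
    rw [h1]
    have h2 : ∫ t : AddCircle (2*π), ‖Φ t‖^2 ∂(volume : Measure (AddCircle (2*π)))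
        = (2*π) * ∫ t : AddCircle (2*π), ‖Φ t‖^2 ∂haarAddCircle := by
      rw [volume_eq_smul_haarAddCircle, integral_smul_measure, ENNReal.toReal_ofReal (by positivity)]
      simp
    have h3 := AddCircle.intervalIntegral_preimage (2*π) 0 (fun t => ‖Φ t‖^2)
    rw [zero_add] at h3
    have h4 : ∀ x : ℝ, ‖Φ (x : AddCircle (2*π))‖^2 = ‖φ x‖^2 := by
      intro x; rw [hΦ]; simp [Function.Periodic.lift_coe]
    have h5 : (∫ x in (0:ℝ)..(2*π), ‖φ x‖^2) = (2*π) * ∫ t, ‖Φ t‖^2 ∂haarAddCircle := by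
      rw [← h2, ← h3]
      exact intervalIntegral.integral_congr (fun x _ => (h4 x).symm)
    rw [h5]
    field_simp
end aux
lemma fourierCoeff_lift_eq (φ : ℝ → ℂ) (hp : Function.Periodic φ (2*π)) (n : ℤ) :
    fourierCoeff hp.lift n
      = (1/(2*π) : ℝ) • ∫ x in (0:ℝ)..(2*π), fourier (-n) (x : AddCircle (2*π)) • φ x := by
  rw [fourierCoeff_eq_intervalIntegral hp.lift n 0, zero_add]
  simp only [Function.Periodic.lift_coe]

lemma fourierCoeff_deriv_rel {g g' : ℝ → ℂ} (hg : ∀ x, HasDerivAt g (g' x) x)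
    (hg'c : Continuous g') (hp : Function.Periodic g (2*π))
    (hp' : Function.Periodic g' (2*π)) (n : ℤ) :
    fourierCoeff hp'.lift n = (Complex.I * n) * fourierCoeff hp.lift n := by
  rw [fourierCoeff_lift_eq, fourierCoeff_lift_eq]
  have hu : ∀ x ∈ Set.uIcc (0:ℝ) (2*π),
      HasDerivAt (fun y : ℝ => fourier (-n) (y : AddCircle (2*π)))
        ((-(Complex.I * n)) * fourier (-n) (x : AddCircle (2*π))) x := by
    intro x _
    have h := hasDerivAt_fourier_neg (2*π) n x
    convert h using 1
    have hπ : (π : ℂ) ≠ 0 := Complex.ofReal_ne_zero.mpr Real.pi_ne_zero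
    field_simp
    push_cast; ring
  have hIBP := intervalIntegral.integral_mul_deriv_eq_deriv_mul hu
    (fun x _ => hg x)
    ((Continuous.mul (by continuity) ((map_continuous (fourier (-n))).comp
        (AddCircle.continuous_mk' (2*π)))).intervalIntegrable 0 (2*π))
    (hg'c.intervalIntegrable 0 (2*π))
  simp only [smul_eq_mul, Complex.real_smul]
  rw [hIBP]
  have hb : ((2*π : ℝ) : AddCircle (2*π)) = ((0:ℝ) : AddCircle (2*π)) := by
    norm_cast
    simpa using AddCircle.coe_period (2*π)
  have hgb : g (2*π) = g 0 := by simpa using hp 0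
  have h6 : (∫ x in (0:ℝ)..(2*π), -(Complex.I * n) * fourier (-n) (x : AddCircle (2*π)) * g x)
      = -(Complex.I * n) * ∫ x in (0:ℝ)..(2*π), fourier (-n) (x : AddCircle (2*π)) * g x := by
    simpa [mul_assoc] using intervalIntegral.integral_const_mul (-(Complex.I * (n:ℂ)))
      (fun x => fourier (-n) (x : AddCircle (2*π)) * g x)
  rw [hb, hgb, h6]
  ring
lemma fourier_neg_one_eq (x : ℝ) :
    (fourier (-1) (x : AddCircle (2*π)) : ℂ) = ↑(Real.cos x) - ↑(Real.sin x) * Complex.I := by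
  rw [fourier_coe_apply]
  have h : 2 * ↑π * Complex.I * ↑(-1 : ℤ) * ↑x / ↑(2 * π) = (-x : ℂ) * Complex.I := by
    have hπ : (π : ℂ) ≠ 0 := Complex.ofReal_ne_zero.mpr Real.pi_ne_zero
    push_cast
    field_simp
  rw [h, Complex.exp_mul_I, Complex.cos_neg, Complex.sin_neg, ← Complex.ofReal_cos,
    ← Complex.ofReal_sin]
  ring

lemma fourier_one_eq (x : ℝ) :
    (fourier (1) (x : AddCircle (2*π)) : ℂ) = ↑(Real.cos x) + ↑(Real.sin x) * Complex.I := by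
  rw [fourier_coe_apply]
  have h : 2 * ↑π * Complex.I * ↑(1 : ℤ) * ↑x / ↑(2 * π) = (x : ℂ) * Complex.I := by
    have hπ : (π : ℂ) ≠ 0 := Complex.ofReal_ne_zero.mpr Real.pi_ne_zero
    push_cast
    field_simp
  rw [h, Complex.exp_mul_I, ← Complex.ofReal_cos, ← Complex.ofReal_sin]

lemma wirtinger4 (f : ℝ → ℝ) (hf : ContDiff ℝ (⊤ : ℕ∞) f)
    (hper : ∀ θ : ℝ, f (θ + 2 * π) = f θ)
    (h0 : (∫ θ in (0:ℝ)..(2*π), f θ) = 0)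
    (hc : (∫ θ in (0:ℝ)..(2*π), f θ * Real.cos θ) = 0)
    (hs : (∫ θ in (0:ℝ)..(2*π), f θ * Real.sin θ) = 0) :
    4 * ∫ θ in (0:ℝ)..(2*π), f θ ^ 2 ≤ ∫ θ in (0:ℝ)..(2*π), (deriv f θ) ^ 2 := by
  set g : ℝ → ℂ := fun x => (f x : ℂ) with hg_def
  have hgp : Function.Periodic g (2*π) := fun x => by simp [hg_def, hper x]
  have hf' : ∀ x, HasDerivAt f (deriv f x) x := fun x =>
    ((hf.differentiable (by simp)) x).hasDerivAt
  have hg : ∀ x, HasDerivAt g (((deriv f x : ℝ) : ℂ)) x := fun x => (hf' x).ofReal_comp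
  have hdp : ∀ x : ℝ, deriv f (x + 2*π) = deriv f x := by
    intro x
    have hfun : (fun y => f (y + 2*π)) = f := funext hper
    rw [← deriv_comp_add_const f (2*π) x, hfun]
  set g' : ℝ → ℂ := fun x => ((deriv f x : ℝ) : ℂ) with hg'_def
  have hgp' : Function.Periodic g' (2*π) := fun x => by simp [hg'_def, hdp x]
  have hgc : Continuous g := Complex.continuous_ofReal.comp hf.continuous
  have hg'c : Continuous g' :=
    Complex.continuous_ofReal.comp (hf.continuous_deriv (by simp))
  obtain ⟨sumG, parG⟩ := parseval_aux hgc hgp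
  obtain ⟨sumG', parG'⟩ := parseval_aux hg'c hgp'
  have hrel := fourierCoeff_deriv_rel hg hg'c hgp hgp'
  have hnorm : ∀ n : ℤ, ‖fourierCoeff hgp'.lift n‖^2
      = (n:ℝ)^2 * ‖fourierCoeff hgp.lift n‖^2 := by
    intro n
    rw [hrel n, norm_mul, norm_mul, Complex.norm_I, one_mul, mul_pow]
    congr 1
    rw [Complex.norm_intCast]
    push_cast
    exact _root_.sq_abs _
  -- vanishing of modes 0, 1, -1
  have hints : ∀ h : ℝ → ℝ, Continuous h → (∫ x in (0:ℝ)..(2*π), (↑(h x) : ℂ))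
      = ((∫ x in (0:ℝ)..(2*π), h x : ℝ) : ℂ) := fun h hh =>
    intervalIntegral.integral_ofReal
  have hv0 : fourierCoeff hgp.lift 0 = 0 := by
    rw [fourierCoeff_lift_eq]
    have : (∫ x in (0:ℝ)..(2*π), fourier (-0) (x : AddCircle (2*π)) • g x)
        = ∫ x in (0:ℝ)..(2*π), (↑(f x) : ℂ) := by
      refine intervalIntegral.integral_congr fun x _ => ?_
      simp [hg_def]
    rw [this, intervalIntegral.integral_ofReal, h0]
    simp
  have hv1 : fourierCoeff hgp.lift 1 = 0 := by
    rw [fourierCoeff_lift_eq]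
    have : (∫ x in (0:ℝ)..(2*π), fourier (-1) (x : AddCircle (2*π)) • g x)
        = ∫ x in (0:ℝ)..(2*π),
            ((↑(f x * Real.cos x) : ℂ) - (↑(f x * Real.sin x) : ℂ) * Complex.I) := by
      refine intervalIntegral.integral_congr fun x _ => ?_
      rw [smul_eq_mul, fourier_neg_one_eq]
      push_cast
      ring
    have e1 : IntervalIntegrable (fun x : ℝ => ((f x * Real.cos x : ℝ) : ℂ)) volume 0 (2*π) := by
      apply Continuous.intervalIntegrable
      exact Complex.continuous_ofReal.comp (hf.continuous.mul Real.continuous_cos)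
    have e2 : IntervalIntegrable (fun x : ℝ => ((f x * Real.sin x : ℝ) : ℂ) * Complex.I) volume 0 (2*π) := by
      apply Continuous.intervalIntegrable
      exact (Complex.continuous_ofReal.comp (hf.continuous.mul Real.continuous_sin)).mul
        continuous_const
    rw [this, intervalIntegral.integral_sub e1 e2,
      intervalIntegral.integral_mul_const, intervalIntegral.integral_ofReal,
      intervalIntegral.integral_ofReal, hc, hs]
    simp
  have hvm1 : fourierCoeff hgp.lift (-1) = 0 := by
    rw [fourierCoeff_lift_eq]
    have : (∫ x in (0:ℝ)..(2*π), fourier (-(-1)) (x : AddCircle (2*π)) • g x)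
        = ∫ x in (0:ℝ)..(2*π),
            ((↑(f x * Real.cos x) : ℂ) + (↑(f x * Real.sin x) : ℂ) * Complex.I) := by
      refine intervalIntegral.integral_congr fun x _ => ?_
      rw [smul_eq_mul, neg_neg, fourier_one_eq]
      push_cast
      ring
    have e1 : IntervalIntegrable (fun x : ℝ => ((f x * Real.cos x : ℝ) : ℂ)) volume 0 (2*π) := by
      apply Continuous.intervalIntegrable
      exact Complex.continuous_ofReal.comp (hf.continuous.mul Real.continuous_cos)
    have e2 : IntervalIntegrable (fun x : ℝ => ((f x * Real.sin x : ℝ) : ℂ) * Complex.I) volume 0 (2*π) := by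
      apply Continuous.intervalIntegrable
      exact (Complex.continuous_ofReal.comp (hf.continuous.mul Real.continuous_sin)).mul
        continuous_const
    rw [this, intervalIntegral.integral_add e1 e2,
      intervalIntegral.integral_mul_const, intervalIntegral.integral_ofReal,
      intervalIntegral.integral_ofReal, hc, hs]
    simp
  -- pointwise comparison of coefficients
  have key : ∀ n : ℤ, 4 * ‖fourierCoeff hgp.lift n‖^2 ≤ ‖fourierCoeff hgp'.lift n‖^2 := by
    intro n
    rw [hnorm n]
    by_cases hn : n = 0 ∨ n = 1 ∨ n = -1
    · rcases hn with h | h | h <;> rw [h] <;> simp [hv0, hv1, hvm1]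
    · push_neg at hn
      have h2 : 2 ≤ |n| := by rw [Int.abs_eq_natAbs]; omega
      have h2' : (2:ℝ) ≤ |(n:ℝ)| := by
        rw [← Int.cast_abs]
        exact_mod_cast h2
      have h4 : (4:ℝ) ≤ (n:ℝ)^2 := by nlinarith [_root_.sq_abs (n:ℝ)]
      exact mul_le_mul_of_nonneg_right h4 (sq_nonneg _)
  have hts := (sumG.mul_left 4).tsum_le_tsum key sumG'
  rw [tsum_mul_left, parG, parG'] at hts
  have hGsq : (∫ x in (0:ℝ)..(2*π), ‖g x‖^2) = ∫ θ in (0:ℝ)..(2*π), f θ ^ 2 :=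
    intervalIntegral.integral_congr fun x _ => by
      simp [hg_def, Complex.norm_real, _root_.sq_abs]
  have hG'sq : (∫ x in (0:ℝ)..(2*π), ‖g' x‖^2) = ∫ θ in (0:ℝ)..(2*π), (deriv f θ) ^ 2 :=
    intervalIntegral.integral_congr fun x _ => by
      simp [hg'_def, Complex.norm_real, _root_.sq_abs]
  rw [hGsq, hG'sq] at hts
  have hpos : (0:ℝ) < 1/(2*π) := by positivity
  have := (mul_le_mul_iff_right₀ hpos).mp (by linarith : (1/(2*π)) * (4 * ∫ θ in (0:ℝ)..(2*π), f θ ^ 2)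
      ≤ (1/(2*π)) * ∫ θ in (0:ℝ)..(2*π), (deriv f θ) ^ 2)
  linarith
/-- Coercivity of the quadratic form associated to the Jacobi operator of the
catenoid, on functions on the cylinder whose Fourier decomposition in `θ`
has no components on the modes `1`, `cos θ` and `sin θ`. -/
theorem catenoid_jacobi_coercivity (w : ℝ → ℝ → ℝ)
    (hw : ContDiff ℝ (⊤ : ℕ∞) (fun p : ℝ × ℝ => w p.1 p.2))
    (hper : ∀ s θ : ℝ, w s (θ + 2 * π) = w s θ)
    (hsupp : ∃ R : ℝ, ∀ s θ : ℝ, R < |s| → w s θ = 0)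
    (h0 : ∀ s : ℝ, (∫ θ in (0:ℝ)..(2 * π), w s θ) = 0)
    (hc : ∀ s : ℝ, (∫ θ in (0:ℝ)..(2 * π), w s θ * Real.cos θ) = 0)
    (hs : ∀ s : ℝ, (∫ θ in (0:ℝ)..(2 * π), w s θ * Real.sin θ) = 0) :
    (∫ s : ℝ, ∫ θ in (0:ℝ)..(2 * π),
        ((deriv (fun s' => w s' θ) s) ^ 2 + (deriv (fun θ' => w s θ') θ) ^ 2
          - (2 / Real.cosh s ^ 2) * (w s θ) ^ 2))
      ≥ 2 * ∫ s : ℝ, ∫ θ in (0:ℝ)..(2 * π), (w s θ) ^ 2 := by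
  obtain ⟨R, hR⟩ := hsupp
  set W : ℝ × ℝ → ℝ := fun p => w p.1 p.2 with hW_def
  have hWd : Differentiable ℝ W := hw.differentiable (by simp)
  -- partial derivatives as values of the Fréchet derivative
  have hds : ∀ s θ : ℝ, HasDerivAt (fun s' => w s' θ) (fderiv ℝ W (s, θ) (1, 0)) s := by
    intro s θ
    have h1 : HasDerivAt (fun s' : ℝ => ((s', θ) : ℝ × ℝ)) (1, 0) s :=
      (hasDerivAt_id s).prodMk (hasDerivAt_const s θ)
    exact ((hWd (s, θ)).hasFDerivAt.comp_hasDerivAt s h1 :)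
  have hdθ : ∀ s θ : ℝ, HasDerivAt (fun θ' => w s θ') (fderiv ℝ W (s, θ) (0, 1)) θ := by
    intro s θ
    have h1 : HasDerivAt (fun θ' : ℝ => ((s, θ') : ℝ × ℝ)) (0, 1) θ :=
      (hasDerivAt_const θ s).prodMk (hasDerivAt_id θ)
    exact ((hWd (s, θ)).hasFDerivAt.comp_hasDerivAt θ h1 :)
  have hderivs : ∀ s θ : ℝ, deriv (fun s' => w s' θ) s = fderiv ℝ W (s, θ) (1, 0) :=
    fun s θ => (hds s θ).deriv
  have hderivθ : ∀ s θ : ℝ, deriv (fun θ' => w s θ') θ = fderiv ℝ W (s, θ) (0, 1) :=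
    fun s θ => (hdθ s θ).deriv
  have hfc : Continuous (fun p : ℝ × ℝ => fderiv ℝ W p) := (hw.continuous_fderiv (by simp))
  have hc10 : Continuous (fun p : ℝ × ℝ => fderiv ℝ W p (1, 0)) :=
    hfc.clm_apply continuous_const
  have hc01 : Continuous (fun p : ℝ × ℝ => fderiv ℝ W p (0, 1)) :=
    hfc.clm_apply continuous_const
  -- the two integrands as jointly continuous functions
  set A : ℝ → ℝ := fun s => ∫ θ in (0:ℝ)..(2*π),
      ((deriv (fun s' => w s' θ) s) ^ 2 + (deriv (fun θ' => w s θ') θ) ^ 2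
        - (2 / Real.cosh s ^ 2) * (w s θ) ^ 2) with hA_def
  set B : ℝ → ℝ := fun s => ∫ θ in (0:ℝ)..(2*π), (w s θ) ^ 2 with hB_def
  have hA_eq : A = fun s => ∫ θ in (0:ℝ)..(2*π),
      ((fderiv ℝ W (s, θ) (1, 0)) ^ 2 + (fderiv ℝ W (s, θ) (0, 1)) ^ 2
        - (2 / Real.cosh s ^ 2) * (w s θ) ^ 2) := by
    funext s
    exact intervalIntegral.integral_congr fun θ _ => by rw [hderivs, hderivθ]
  -- continuity of A and B
  have hAc : Continuous A := by
    rw [hA_eq]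
    apply intervalIntegral.continuous_parametric_intervalIntegral_of_continuous' (μ := volume)
    show Continuous fun p : ℝ × ℝ =>
      (fderiv ℝ W p (1, 0)) ^ 2 + (fderiv ℝ W p (0, 1)) ^ 2
        - (2 / Real.cosh p.1 ^ 2) * (w p.1 p.2) ^ 2
    have hcosh : Continuous fun p : ℝ × ℝ => 2 / Real.cosh p.1 ^ 2 := by
      apply Continuous.div continuous_const
        ((Real.continuous_cosh.comp continuous_fst).pow 2)
      intro p
      exact (pow_pos (Real.cosh_pos p.1) 2).ne'
    exact ((hc10.pow 2).add (hc01.pow 2)).sub (hcosh.mul (hw.continuous.pow 2))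
  have hBc : Continuous B := by
    apply intervalIntegral.continuous_parametric_intervalIntegral_of_continuous' (μ := volume)
    show Continuous fun p : ℝ × ℝ => (w p.1 p.2) ^ 2
    exact hw.continuous.pow 2
  -- vanishing outside a compact set
  set R' : ℝ := max R 0 with hR'_def
  have hvanish : ∀ s : ℝ, R' < |s| → A s = 0 ∧ B s = 0 := by
    intro s hsR
    have hRs : R < |s| := lt_of_le_of_lt (le_max_left R 0) hsR
    have hw0 : ∀ θ, w s θ = 0 := fun θ => hR s θ hRs
    have hds0 : ∀ θ, deriv (fun s' => w s' θ) s = 0 := by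
      intro θ
      have hopen : IsOpen {s' : ℝ | R < |s'|} := isOpen_lt continuous_const continuous_abs
      have hev : (fun s' => w s' θ) =ᶠ[nhds s] (fun _ => (0:ℝ)) := by
        filter_upwards [hopen.mem_nhds hRs] with s' hs'
        exact hR s' θ hs'
      rw [hev.deriv_eq, deriv_const]
    have hdθ0 : ∀ θ, deriv (fun θ' => w s θ') θ = 0 := by
      intro θ
      have : (fun θ' => w s θ') = fun _ => (0:ℝ) := funext fun θ' => hw0 θ'
      rw [this, deriv_const]
    constructor
    · rw [hA_def]
      simp only
      calc (∫ θ in (0:ℝ)..(2*π),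
              ((deriv (fun s' => w s' θ) s) ^ 2 + (deriv (fun θ' => w s θ') θ) ^ 2
                - (2 / Real.cosh s ^ 2) * (w s θ) ^ 2))
          = ∫ _θ in (0:ℝ)..(2*π), (0:ℝ) :=
            intervalIntegral.integral_congr fun θ _ => by rw [hds0, hdθ0, hw0]; ring
        _ = 0 := intervalIntegral.integral_zero
    · rw [hB_def]
      simp only
      calc (∫ θ in (0:ℝ)..(2*π), (w s θ) ^ 2)
          = ∫ _θ in (0:ℝ)..(2*π), (0:ℝ) :=
            intervalIntegral.integral_congr fun θ _ => by rw [hw0]; ring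
        _ = 0 := intervalIntegral.integral_zero
  have hAsupp : HasCompactSupport A := by
    apply HasCompactSupport.intro (isCompact_Icc (a := -(R'+1)) (b := R'+1))
    intro s hsmem
    refine (hvanish s ?_).1
    simp only [Set.mem_Icc, not_and_or, not_le] at hsmem
    rcases hsmem with h | h
    · calc R' < R' + 1 := by linarith
        _ < -s := by linarith
        _ ≤ |s| := neg_le_abs s
    · calc R' < R' + 1 := by linarith
        _ ≤ s := le_of_lt h
        _ ≤ |s| := le_abs_self s
  have hBsupp : HasCompactSupport B := by
    apply HasCompactSupport.intro (isCompact_Icc (a := -(R'+1)) (b := R'+1))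
    intro s hsmem
    refine (hvanish s ?_).2
    simp only [Set.mem_Icc, not_and_or, not_le] at hsmem
    rcases hsmem with h | h
    · calc R' < R' + 1 := by linarith
        _ < -s := by linarith
        _ ≤ |s| := neg_le_abs s
    · calc R' < R' + 1 := by linarith
        _ ≤ s := le_of_lt h
        _ ≤ |s| := le_abs_self s
  have hAint : Integrable A := hAc.integrable_of_hasCompactSupport hAsupp
  have hBint : Integrable B := hBc.integrable_of_hasCompactSupport hBsupp
  -- pointwise inequality 2 * B s ≤ A s
  have hpoint : ∀ s : ℝ, 2 * B s ≤ A s := by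
    intro s
    have hπ : (0:ℝ) ≤ 2*π := by positivity
    -- interval integrability of pieces
    have i1 : IntervalIntegrable (fun θ : ℝ => (deriv (fun s' => w s' θ) s) ^ 2)
        volume 0 (2*π) := by
      have : (fun θ : ℝ => (deriv (fun s' => w s' θ) s) ^ 2)
          = fun θ : ℝ => (fderiv ℝ W (s, θ) (1, 0)) ^ 2 := funext fun θ => by rw [hderivs]
      rw [this]
      exact ((hc10.comp (Continuous.prodMk_right s)).pow 2).intervalIntegrable 0 (2*π)
    have i2 : IntervalIntegrable (fun θ : ℝ => (deriv (fun θ' => w s θ') θ) ^ 2)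
        volume 0 (2*π) := by
      have : (fun θ : ℝ => (deriv (fun θ' => w s θ') θ) ^ 2)
          = fun θ : ℝ => (fderiv ℝ W (s, θ) (0, 1)) ^ 2 := funext fun θ => by rw [hderivθ]
      rw [this]
      exact ((hc01.comp (Continuous.prodMk_right s)).pow 2).intervalIntegrable 0 (2*π)
    have i3 : IntervalIntegrable (fun θ : ℝ => (2 / Real.cosh s ^ 2) * (w s θ) ^ 2)
        volume 0 (2*π) := by
      exact (continuous_const.mul (((hw.continuous.comp (Continuous.prodMk_right s))).pow 2)).intervalIntegrable 0 (2*π)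
    have hsplit : A s = (∫ θ in (0:ℝ)..(2*π), (deriv (fun s' => w s' θ) s) ^ 2)
        + (∫ θ in (0:ℝ)..(2*π), (deriv (fun θ' => w s θ') θ) ^ 2)
        - (2 / Real.cosh s ^ 2) * B s := by
      rw [hA_def, hB_def]
      simp only
      rw [← intervalIntegral.integral_const_mul,
        ← intervalIntegral.integral_add i1 i2,
        ← intervalIntegral.integral_sub (i1.add i2) i3]
    -- Wirtinger for f = w s
    have hWir : 4 * B s ≤ ∫ θ in (0:ℝ)..(2*π), (deriv (fun θ' => w s θ') θ) ^ 2 := by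
      rw [hB_def]
      exact wirtinger4 (fun θ => w s θ)
        (hw.comp ((contDiff_const (c := s)).prodMk contDiff_id))
        (hper s) (h0 s) (hc s) (hs s)
    have hP : 0 ≤ ∫ θ in (0:ℝ)..(2*π), (deriv (fun s' => w s' θ) s) ^ 2 :=
      intervalIntegral.integral_nonneg hπ fun θ _ => sq_nonneg _
    have hBnn : 0 ≤ B s := by
      rw [hB_def]
      exact intervalIntegral.integral_nonneg hπ fun θ _ => sq_nonneg _
    have hcosh1 : (1:ℝ) ≤ Real.cosh s ^ 2 := by
      nlinarith [Real.one_le_cosh s]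
    have hcle : 2 / Real.cosh s ^ 2 ≤ 2 := by
      rw [div_le_iff₀ (by linarith)]
      nlinarith
    have hcle' : (2 / Real.cosh s ^ 2) * B s ≤ 2 * B s :=
      mul_le_mul_of_nonneg_right hcle hBnn
    linarith [hsplit, hWir, hP, hcle']
  -- conclude
  have h2B : Integrable (fun s => 2 * B s) := hBint.const_mul 2
  have := integral_mono h2B hAint hpoint
  rwa [integral_const_mul] at this
end

section
/- Let m ≥ 1 be an integer, let z_j = (cos(2πj/(m+1)), sin(2πj/(m+1))) ∈ ℝ² for j = 0, …, m, and set a₀ := ∑_{j=1}^{m} log‖z_j − z₀‖ and G(x) := −∑_{j=0}^{m} log‖x − z_j‖. Then there exist constants C > 0 and ε ∈ (0,1) such that for every y ∈ ℝ² with 0 < ‖y‖ < ε, | G(z₀ + y) + log‖y‖ + a₀ + (m/2)⟨z₀, y⟩ | ≤ C ‖y‖². -/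
open Real

/-- The `(m+1)`-th roots of unity, viewed as points of the plane `ℝ² ≃ ℂ`:
`z j = (cos(2πj/(m+1)), sin(2πj/(m+1)))`. -/
noncomputable def polygonVertex (m j : ℕ) : ℂ :=
  ⟨Real.cos (2 * π * j / (m + 1)), Real.sin (2 * π * j / (m + 1))⟩

/-!
Since `z₀ = 1`, the `j = 0` term of `G(z₀ + y)` cancels `log ‖y‖`, and with `w j = 1 - z j ≠ 0`
the remainder is `-∑_{j ≥ 1} (log ‖w j + y‖ - log ‖w j‖ - Re (y / w j))`, each summand being
`O(‖y‖²)` by `|log (1 + u) - u| ≤ ‖u‖²` for `‖u‖ ≤ 1/2`. This uses `∑_{j ≥ 1} (1 - z j)⁻¹ = m/2`,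
which holds because `j ↦ m + 1 - j` conjugates the vertices and `(1 - z)⁻¹ + (1 - conj z)⁻¹ = 1`
on the unit circle.
-/

open Finset Asymptotics Filter Topology ComplexConjugate

namespace Complex

lemma inv_one_sub_add_inv_one_sub_conj {z : ℂ} (hz : ‖z‖ = 1) (hz1 : z ≠ 1) :
    (1 - z)⁻¹ + (1 - conj z)⁻¹ = 1 := by
  have hsub : 1 - z ≠ 0 := sub_ne_zero.2 hz1.symm
  have hsub' : 1 - conj z ≠ 0 := by
    rw [← map_one conj, ← map_sub]; exact (map_ne_zero _).2 hsub
  have hmul : z * conj z = 1 := by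
    rw [mul_conj, normSq_eq_norm_sq, hz]; norm_num
  field_simp
  linear_combination -hmul

lemma abs_log_norm_one_add_sub_re_le {u : ℂ} (hu : ‖u‖ ≤ 1 / 2) :
    |Real.log ‖1 + u‖ - u.re| ≤ ‖u‖ ^ 2 := by
  have hlog : Real.log ‖1 + u‖ - u.re = (log (1 + u) - u).re := by
    rw [sub_re, log_re]
  calc |Real.log ‖1 + u‖ - u.re| ≤ ‖log (1 + u) - u‖ := hlog ▸ abs_re_le_norm _
    _ ≤ ‖u‖ ^ 2 * (1 - ‖u‖)⁻¹ / 2 := norm_log_one_add_sub_self_le (by linarith)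
    _ ≤ ‖u‖ ^ 2 := by
      have : (1 - ‖u‖)⁻¹ ≤ 2 := by
        rw [inv_le_comm₀ (by linarith) two_pos]; linarith
      nlinarith [sq_nonneg ‖u‖]

lemma isBigO_log_norm_add_sub_re_div {w : ℂ} (hw : w ≠ 0) :
    (fun y : ℂ ↦ Real.log ‖w + y‖ - Real.log ‖w‖ - (y / w).re) =O[𝓝 0] fun y ↦ ‖y‖ ^ 2 := by
  have hw' : 0 < ‖w‖ := norm_pos_iff.2 hw
  have hsmall : ∀ᶠ y : ℂ in 𝓝 0, ‖y / w‖ ≤ 1 / 2 := by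
    have : Tendsto (fun y : ℂ ↦ ‖y / w‖) (𝓝 0) (𝓝 0) := by
      simpa using ((continuous_id.div_const w).norm.tendsto (0 : ℂ))
    exact this.eventually (ge_mem_nhds (by norm_num))
  refine IsBigO.of_bound (‖w‖⁻¹ ^ 2) (hsmall.mono fun y hy ↦ ?_)
  have hfac : w + y = w * (1 + y / w) := by field_simp
  have h1 : ‖1 + y / w‖ ≠ 0 := by
    have := norm_sub_norm_le (1 : ℂ) (-(y / w))
    rw [norm_neg, norm_one, sub_neg_eq_add] at this
    linarith
  rw [hfac, norm_mul, Real.log_mul hw'.ne' h1, add_sub_cancel_left, Real.norm_eq_abs,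
    norm_pow, norm_norm]
  calc _ ≤ ‖y / w‖ ^ 2 := abs_log_norm_one_add_sub_re_le hy
    _ = ‖w‖⁻¹ ^ 2 * ‖y‖ ^ 2 := by rw [norm_div]; ring

end Complex

lemma polygonVertex_zero (m : ℕ) : polygonVertex m 0 = 1 := by
  simp [polygonVertex, Complex.ext_iff]

lemma norm_polygonVertex (m j : ℕ) : ‖polygonVertex m j‖ = 1 := by
  simp [polygonVertex, Complex.norm_def, Complex.normSq_mk, ← sq]

lemma polygonVertex_ne_one {m j : ℕ} (hj : j ∈ Icc 1 m) : polygonVertex m j ≠ 1 := by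
  obtain ⟨hj1, hjm⟩ := mem_Icc.1 hj
  intro h
  have hcos : Real.cos (2 * π * j / (m + 1)) = 1 := congrArg Complex.re h
  have hj1' : (1 : ℝ) ≤ j := by exact_mod_cast hj1
  have hjm' : (j : ℝ) < m + 1 := by exact_mod_cast Nat.lt_succ_of_le hjm
  have hpos : 0 < 2 * π * j / (m + 1) := by positivity
  have hlt : 2 * π * j / (m + 1) < 2 * π := by
    rw [div_lt_iff₀ (by positivity)]; nlinarith [pi_pos]
  have := (Real.cos_eq_one_iff_of_lt_of_lt (by linarith) hlt).1 hcos
  linarith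

lemma polygonVertex_reflect (m : ℕ) {j : ℕ} (hj : j ≤ m + 1) :
    polygonVertex m (m + 1 - j) = conj (polygonVertex m j) := by
  have harg : 2 * π * ((m + 1 - j : ℕ) : ℝ) / (m + 1) = 2 * π - 2 * π * j / (m + 1) := by
    rw [Nat.cast_sub hj]; push_cast; field_simp
  simp only [polygonVertex, Complex.ext_iff, Complex.conj_re, Complex.conj_im, harg,
    Real.cos_two_pi_sub, Real.sin_two_pi_sub, and_self]

lemma sum_inv_one_sub_polygonVertex (m : ℕ) :
    ∑ j ∈ Icc 1 m, (1 - polygonVertex m j)⁻¹ = m / 2 := by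
  have hreflect : ∑ j ∈ Icc 1 m, (1 - polygonVertex m j)⁻¹
      = ∑ j ∈ Icc 1 m, (1 - conj (polygonVertex m j))⁻¹ := by
    refine sum_nbij' (m + 1 - ·) (m + 1 - ·) ?_ ?_ ?_ ?_ ?_ <;> intro j hj <;>
      simp only [mem_Icc] at hj ⊢
    iterate 4 omega
    rw [polygonVertex_reflect m (by omega), Complex.conj_conj]
  have hpair : 2 * ∑ j ∈ Icc 1 m, (1 - polygonVertex m j)⁻¹ = m := by
    rw [two_mul]
    nth_rewrite 2 [hreflect]
    rw [← sum_add_distrib, sum_congr rfl fun j hj ↦ Complex.inv_one_sub_add_inv_one_sub_conj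
      (norm_polygonVertex m j) (polygonVertex_ne_one hj)]
    simp
  linear_combination hpair / 2

lemma sum_re_div_one_sub_polygonVertex (m : ℕ) (y : ℂ) :
    ∑ j ∈ Icc 1 m, (y / (1 - polygonVertex m j)).re = m / 2 * y.re := by
  simp_rw [← Complex.re_sum, div_eq_mul_inv, ← mul_sum, sum_inv_one_sub_polygonVertex]
  simp only [Complex.mul_re, Complex.div_ofNat_re, Complex.natCast_re, Complex.div_ofNat_im,
    Complex.natCast_im, zero_div, mul_zero, sub_zero]
  ring

lemma green_remainder_eq_neg_sum (m : ℕ) (y : ℂ) :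
    (-(∑ j ∈ Finset.range (m + 1),
            Real.log ‖(polygonVertex m 0 + y) - polygonVertex m j‖))
          + Real.log ‖y‖
          + (∑ j ∈ Finset.Icc 1 m, Real.log ‖polygonVertex m j - polygonVertex m 0‖)
          + ((m : ℝ) / 2) *
              ((polygonVertex m 0).re * y.re + (polygonVertex m 0).im * y.im)
      = -∑ j ∈ Icc 1 m, (Real.log ‖(1 - polygonVertex m j) + y‖
          - Real.log ‖1 - polygonVertex m j‖ - (y / (1 - polygonVertex m j)).re) := by
  rw [range_eq_Ico, sum_eq_sum_Ico_succ_bot (Nat.succ_pos m), zero_add,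
    Nat.succ_eq_add_one, Ico_add_one_right_eq_Icc, sum_sub_distrib, sum_sub_distrib,
    sum_re_div_one_sub_polygonVertex, polygonVertex_zero]
  simp only [sub_self, zero_add, Complex.one_re, Complex.one_im, one_mul, zero_mul, add_zero,
    norm_sub_rev _ (1 : ℂ), add_sub_right_comm]
  ring

theorem green_function_expansion_at_vertex_general (m : ℕ) :
    ∃ C > (0:ℝ), ∃ ε ∈ Set.Ioo (0:ℝ) 1, ∀ y : ℂ, 0 < ‖y‖ → ‖y‖ < ε →
      |(-(∑ j ∈ Finset.range (m + 1),
            Real.log ‖(polygonVertex m 0 + y) - polygonVertex m j‖))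
          + Real.log ‖y‖
          + (∑ j ∈ Finset.Icc 1 m, Real.log ‖polygonVertex m j - polygonVertex m 0‖)
          + ((m : ℝ) / 2) *
              ((polygonVertex m 0).re * y.re + (polygonVertex m 0).im * y.im)|
        ≤ C * ‖y‖ ^ 2 := by
  have hO := IsBigO.fun_sum fun j hj ↦
    Complex.isBigO_log_norm_add_sub_re_div (sub_ne_zero.2 (polygonVertex_ne_one (m := m) hj).symm)
  obtain ⟨C, hC, hCw⟩ := hO.exists_pos
  obtain ⟨ε, hε, hball⟩ := Metric.eventually_nhds_iff.1 hCw.bound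
  refine ⟨C, hC, min ε (1 / 2), ⟨by positivity, by linarith [min_le_right ε (1 / 2)]⟩,
    fun y _ hy ↦ ?_⟩
  have hbound := hball (y := y) (by simpa using hy.trans_le (min_le_left _ _))
  rw [norm_pow, norm_norm, Real.norm_eq_abs] at hbound
  rwa [green_remainder_eq_neg_sum, abs_neg]

/-- Expansion of the Green's function `G(x) = −∑_{j=0}^m log‖x − z_j‖` at the
vertex `z₀`: with `a₀ = ∑_{j=1}^m log‖z_j − z₀‖`, one has
`G(z₀ + y) = −log‖y‖ − a₀ − (m/2)⟨z₀, y⟩ + O(‖y‖²)` for small `y ≠ 0`. -/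
theorem green_function_expansion_at_vertex (m : ℕ) (hm : 1 ≤ m) :
    ∃ C > (0:ℝ), ∃ ε ∈ Set.Ioo (0:ℝ) 1, ∀ y : ℂ, 0 < ‖y‖ → ‖y‖ < ε →
      |(-(∑ j ∈ Finset.range (m + 1),
            Real.log ‖(polygonVertex m 0 + y) - polygonVertex m j‖))
          + Real.log ‖y‖
          + (∑ j ∈ Finset.Icc 1 m, Real.log ‖polygonVertex m j - polygonVertex m 0‖)
          + ((m : ℝ) / 2) *
              ((polygonVertex m 0).re * y.re + (polygonVertex m 0).im * y.im)|
        ≤ C * ‖y‖ ^ 2 :=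
  green_function_expansion_at_vertex_general m
end

section
/- For τ > 0 set τ̲ := (√(1+4τ) − 1)/2, τ̄ := (√(1+4τ) + 1)/2, and define s_τ := ∫_{τ̲}^{τ̄} dζ / √( ζ² − (ζ² − τ)² ). Then there exist constants C > 0 and τ₀ ∈ (0,1) such that for all τ ∈ (0, τ₀), | s_τ + log τ | ≤ C; that is, s_τ = −log τ + O(1) as τ → 0. -/
open Real MeasureTheory Set intervalIntegral

/-!
With `a = τ̲` and `b = τ̄ = a + 1` we have `τ = a b` and `ζ² − (ζ² − τ)² = P Q`, where
`P = ζ² − a²` and `Q = b² − ζ²` add up to the constant `w² = b² − a²`. Hence pointwise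
`1 / (w √P) ≤ 1 / √(P Q) ≤ (1 / √P + 1 / √Q) / w`, the right inequality being `w ≤ √P + √Q`.
The primitives `log (ζ + √P)` and `arcsin (ζ / b)` give `∫ 1 / √P = log (b + w) − log a` and
`∫ 1 / √Q ≤ π / 2`. As `w = √(1 + 2a) = 1 + O(a)` and `a log a` is bounded, both bounds are
`−log a + O(1) = −log τ + O(1)`.
-/

theorem integral_eq_sub_of_hasDerivAt_of_nonneg {f f' : ℝ → ℝ} {a b : ℝ} (hab : a ≤ b)
    (hcont : ContinuousOn f (Icc a b)) (hderiv : ∀ x ∈ Ioo a b, HasDerivAt f (f' x) x)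
    (hpos : ∀ x ∈ Ioo a b, 0 ≤ f' x) :
    IntervalIntegrable f' volume a b ∧ ∫ x in a..b, f' x = f b - f a := by
  have hint : IntervalIntegrable f' volume a b :=
    (intervalIntegrable_iff_integrableOn_Ioc_of_le hab).2
      (integrableOn_deriv_of_nonneg hcont hderiv hpos)
  exact ⟨hint, integral_eq_sub_of_hasDerivAt_of_le hab hcont hderiv hint⟩

theorem hasDerivAt_log_add_sqrt_sq_sub_sq {a x : ℝ} (hx : 0 < x) (hax : a ^ 2 < x ^ 2) :
    HasDerivAt (fun y => log (y + √(y ^ 2 - a ^ 2))) (1 / √(x ^ 2 - a ^ 2)) x := by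
  have hu : 0 < √(x ^ 2 - a ^ 2) := sqrt_pos.2 (by linarith)
  have hsq : HasDerivAt (fun y => y ^ 2 - a ^ 2) (2 * x) x := by
    simpa using (hasDerivAt_pow 2 x).sub_const (a ^ 2)
  refine (((hasDerivAt_id x).add (hsq.sqrt (sub_pos.2 hax).ne')).log
    (by simp only [Pi.add_apply, id]; positivity)).congr_deriv ?_
  simp only [Pi.add_apply, id]
  field_simp
  ring

theorem integral_one_div_sqrt_sq_sub_sq_eq_log {a b : ℝ} (ha : 0 < a) (hab : a ≤ b) :
    IntervalIntegrable (fun x => 1 / √(x ^ 2 - a ^ 2)) volume a b ∧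
      ∫ x in a..b, 1 / √(x ^ 2 - a ^ 2) = log (b + √(b ^ 2 - a ^ 2)) - log a := by
  have hpos : ∀ x ∈ Icc a b, 0 < x + √(x ^ 2 - a ^ 2) := fun x hx => by
    have : 0 < x := ha.trans_le hx.1
    positivity
  have hcont : ContinuousOn (fun x => log (x + √(x ^ 2 - a ^ 2))) (Icc a b) :=
    ContinuousOn.log (by fun_prop) fun x hx => (hpos x hx).ne'
  have hderiv : ∀ x ∈ Ioo a b, HasDerivAt (fun y => log (y + √(y ^ 2 - a ^ 2)))
      (1 / √(x ^ 2 - a ^ 2)) x := fun x hx =>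
    hasDerivAt_log_add_sqrt_sq_sub_sq (ha.trans hx.1) (by nlinarith [hx.1])
  simpa using integral_eq_sub_of_hasDerivAt_of_nonneg hab hcont hderiv
    fun x _ => by positivity

theorem hasDerivAt_arcsin_div {b x : ℝ} (hb : 0 < b) (hx : x ^ 2 < b ^ 2) :
    HasDerivAt (fun y => arcsin (y / b)) (1 / √(b ^ 2 - x ^ 2)) x := by
  have hxb : (x / b) ^ 2 < 1 := by rw [div_pow, div_lt_one (by positivity)]; exact hx
  have h1 : x / b ≠ -1 := fun h => by rw [h] at hxb; norm_num at hxb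
  have h2 : x / b ≠ 1 := fun h => by rw [h] at hxb; norm_num at hxb
  refine ((hasDerivAt_arcsin h1 h2).comp x ((hasDerivAt_id x).div_const b)).congr_deriv ?_
  rw [show 1 - (x / b) ^ 2 = (b ^ 2 - x ^ 2) / b ^ 2 by field_simp,
    sqrt_div' _ (by positivity), sqrt_sq hb.le]
  field_simp

theorem integral_one_div_sqrt_sq_sub_sq_eq_arcsin {a b : ℝ} (hb : 0 < b) (ha : -b ≤ a)
    (hab : a ≤ b) :
    IntervalIntegrable (fun x => 1 / √(b ^ 2 - x ^ 2)) volume a b ∧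
      ∫ x in a..b, 1 / √(b ^ 2 - x ^ 2) = π / 2 - arcsin (a / b) := by
  have hderiv : ∀ x ∈ Ioo a b, HasDerivAt (fun y => arcsin (y / b))
      (1 / √(b ^ 2 - x ^ 2)) x := fun x hx =>
    hasDerivAt_arcsin_div hb (by nlinarith [hx.1, hx.2])
  simpa [div_self hb.ne'] using
    integral_eq_sub_of_hasDerivAt_of_nonneg hab (by fun_prop) hderiv fun x _ => by positivity

theorem one_div_sqrt_mul_le_div_sqrt_add {P Q : ℝ} (hPQ : 0 ≤ P + Q) :
    1 / √(P * Q) ≤ (1 / √P + 1 / √Q) / √(P + Q) := by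
  rcases le_or_gt (P * Q) 0 with hPQ' | hPQ'
  · rw [sqrt_eq_zero'.2 hPQ', div_zero]
    positivity
  have hP : 0 < P := by nlinarith
  have hQ : 0 < Q := by nlinarith
  have hu : 0 < √P := sqrt_pos.2 hP
  have hv : 0 < √Q := sqrt_pos.2 hQ
  have hs : √(P + Q) ≤ √P + √Q :=
    (sqrt_le_sqrt (by nlinarith [sq_sqrt hP.le, sq_sqrt hQ.le] : P + Q ≤ (√P + √Q) ^ 2)).trans_eq
      (sqrt_sq (by positivity))
  rw [sqrt_mul hP.le, div_add_div _ _ hu.ne' hv.ne', div_div,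
    div_le_div_iff₀ (by positivity) (by positivity)]
  nlinarith [mul_pos hu hv]

theorem div_sqrt_add_le_one_div_sqrt_mul {P Q : ℝ} (hQ : 0 < Q) :
    1 / √P / √(P + Q) ≤ 1 / √(P * Q) := by
  rcases le_or_gt P 0 with hP | hP
  · simp [sqrt_eq_zero'.2 hP]
  rw [sqrt_mul hP.le, div_div, one_div_le_one_div (by positivity) (by positivity)]
  gcongr
  linarith

theorem integral_one_div_sqrt_mul_bounds {a b : ℝ} (ha : 0 < a) (hab : a < b) :
    (log (b + √(b ^ 2 - a ^ 2)) - log a) / √(b ^ 2 - a ^ 2) ≤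
        ∫ x in a..b, 1 / √((x ^ 2 - a ^ 2) * (b ^ 2 - x ^ 2)) ∧
      ∫ x in a..b, 1 / √((x ^ 2 - a ^ 2) * (b ^ 2 - x ^ 2)) ≤
        (log (b + √(b ^ 2 - a ^ 2)) - log a + π / 2) / √(b ^ 2 - a ^ 2) := by
  have hsum : ∀ x : ℝ, x ^ 2 - a ^ 2 + (b ^ 2 - x ^ 2) = b ^ 2 - a ^ 2 := fun x => by ring
  obtain ⟨hu_int, hu⟩ := integral_one_div_sqrt_sq_sub_sq_eq_log ha hab.le
  obtain ⟨hv_int, hv⟩ :=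
    integral_one_div_sqrt_sq_sub_sq_eq_arcsin (ha.trans hab) (by linarith) hab.le
  have hupper : ∀ x, 1 / √((x ^ 2 - a ^ 2) * (b ^ 2 - x ^ 2)) ≤
      (1 / √(x ^ 2 - a ^ 2) + 1 / √(b ^ 2 - x ^ 2)) / √(b ^ 2 - a ^ 2) := fun x => by
    have := one_div_sqrt_mul_le_div_sqrt_add (by rw [hsum x]; nlinarith)
    rwa [hsum] at this
  have hint :
      IntervalIntegrable (fun x => 1 / √((x ^ 2 - a ^ 2) * (b ^ 2 - x ^ 2))) volume a b :=
    ((hu_int.add hv_int).div_const _).mono_fun'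
      (by fun_prop : Measurable _).aestronglyMeasurable <|
      .of_forall fun x => (norm_of_nonneg (by positivity)).trans_le (hupper x)
  constructor
  · calc (log (b + √(b ^ 2 - a ^ 2)) - log a) / √(b ^ 2 - a ^ 2)
        = ∫ x in a..b, 1 / √(x ^ 2 - a ^ 2) / √(b ^ 2 - a ^ 2) := by
          rw [intervalIntegral.integral_div, hu]
      _ ≤ _ := integral_mono_on_of_le_Ioo hab.le (hu_int.div_const _) hint fun x hx => by
          have := div_sqrt_add_le_one_div_sqrt_mul (P := x ^ 2 - a ^ 2)
            (by nlinarith [hx.1, hx.2] : 0 < b ^ 2 - x ^ 2)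
          rwa [hsum] at this
  · calc _ ≤ ∫ x in a..b, (1 / √(x ^ 2 - a ^ 2) + 1 / √(b ^ 2 - x ^ 2)) / √(b ^ 2 - a ^ 2) :=
          intervalIntegral.integral_mono hab.le hint ((hu_int.add hv_int).div_const _) hupper
      _ = (log (b + √(b ^ 2 - a ^ 2)) - log a + (π / 2 - arcsin (a / b))) /
            √(b ^ 2 - a ^ 2) := by
          rw [intervalIntegral.integral_div, integral_add hu_int hv_int, hu, hv]
      _ ≤ _ := by
          gcongr
          linarith [arcsin_nonneg.2 (div_nonneg ha.le (ha.trans hab).le)]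

theorem abs_integral_nodoid_add_log_le {a : ℝ} (ha : 0 < a) (ha1 : a ≤ 1) :
    |(∫ x in a..(a + 1), 1 / √(x ^ 2 - (x ^ 2 - a * (a + 1)) ^ 2)) + log (a * (a + 1))| ≤ 6 := by
  have hfactor : ∀ x : ℝ, x ^ 2 - (x ^ 2 - a * (a + 1)) ^ 2 =
      (x ^ 2 - a ^ 2) * ((a + 1) ^ 2 - x ^ 2) := fun x => by ring
  simp only [hfactor]
  obtain ⟨hlower, hupper⟩ := integral_one_div_sqrt_mul_bounds ha (lt_add_one a)
  set I := ∫ x in a..(a + 1), 1 / √((x ^ 2 - a ^ 2) * ((a + 1) ^ 2 - x ^ 2))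
  set w := √((a + 1) ^ 2 - a ^ 2)
  have hw_sq : w ^ 2 = 1 + 2 * a := by rw [sq_sqrt (by nlinarith)]; ring
  have hw1 : 1 ≤ w := by nlinarith [sqrt_nonneg ((a + 1) ^ 2 - a ^ 2)]
  have hwa : w ≤ 1 + a := by nlinarith [sqrt_nonneg ((a + 1) ^ 2 - a ^ 2)]
  have hloga : log a ≤ 0 := log_nonpos ha.le ha1
  have halog : -1 < a * log a := by
    have := abs_log_mul_self_lt a ha ha1
    rw [abs_lt] at this
    linarith
  have hlogbw : log (a + 1 + w) ≤ 3 := by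
    linarith [log_le_sub_one_of_pos (by positivity : 0 < a + 1 + w)]
  have hlogbw0 : 0 ≤ log (a + 1 + w) := log_nonneg (by linarith)
  have hlogb : log (a + 1) ≤ 1 := by
    linarith [log_le_sub_one_of_pos (by positivity : 0 < a + 1)]
  have hlogb0 : 0 ≤ log (a + 1) := log_nonneg (by linarith)
  have hX : 0 ≤ log (a + 1 + w) - log a := by linarith
  have hXlow : (log (a + 1 + w) - log a) * (1 - a) ≤ (log (a + 1 + w) - log a) / w := by
    rw [le_div_iff₀ (by linarith)]
    nlinarith [mul_le_mul_of_nonneg_left hwa (mul_nonneg hX (sub_nonneg.2 ha1)),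
      mul_nonneg hX (sq_nonneg a)]
  have hXup : (log (a + 1 + w) - log a + π / 2) / w ≤ log (a + 1 + w) - log a + π / 2 :=
    div_le_self (by linarith [pi_pos]) hw1
  rw [log_mul ha.ne' (by linarith), abs_le]
  constructor
  · nlinarith [mul_nonneg hlogbw0 (sub_nonneg.2 ha1)]
  · linarith [pi_lt_four]

/-- Asymptotics of half of the fundamental period of the Delaunay nodoid profile:
with `τ̲ = (√(1+4τ) − 1)/2` and `τ̄ = (√(1+4τ) + 1)/2`,
`s_τ = ∫_{τ̲}^{τ̄} dζ/√(ζ² − (ζ² − τ)²) = −log τ + O(1)` as `τ → 0`. -/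
theorem delaunay_half_period_asymptotics :
    ∃ C > (0:ℝ), ∃ τ₀ ∈ Set.Ioo (0:ℝ) 1, ∀ τ ∈ Set.Ioo (0:ℝ) τ₀,
      |(∫ ζ in ((Real.sqrt (1 + 4 * τ) - 1) / 2)..((Real.sqrt (1 + 4 * τ) + 1) / 2),
          1 / Real.sqrt (ζ ^ 2 - (ζ ^ 2 - τ) ^ 2))
        + Real.log τ| ≤ C := by
  refine ⟨6, by norm_num, 1 / 2, by norm_num, fun τ ⟨hτ0, hτ1⟩ => ?_⟩
  have hs : √(1 + 4 * τ) ^ 2 = 1 + 4 * τ := sq_sqrt (by linarith)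
  have hs1 : 1 < √(1 + 4 * τ) := by nlinarith [sqrt_nonneg (1 + 4 * τ)]
  have hs3 : √(1 + 4 * τ) ≤ 3 := by nlinarith [sqrt_nonneg (1 + 4 * τ)]
  set a := (√(1 + 4 * τ) - 1) / 2 with ha
  have hτa : τ = a * (a + 1) := by rw [ha]; linear_combination -hs / 4
  rw [show (√(1 + 4 * τ) + 1) / 2 = a + 1 by rw [ha]; ring, hτa]
  exact abs_integral_nodoid_add_log_le (by rw [ha]; linarith) (by rw [ha]; linarith)
end
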